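/- Opposite-orientation case of Algorithm 3: consider the transition system on unordered pairs {i,j} of ℤ/4 together with a tag R or L, where the following states achieve rendezvous in one round: L{0,0}, L{0,1}, L{0,2}, L{1,1}, L{1,2}, L{2,2}, R{0,0}, R{0,2}, R{0,3}, R{2,2}, R{2,3}, R{3,3}; and the remaining transitions are: L{0,3}→R{0,1}, L{1,3}→R{0,2}, L{2,3}→R{0,3}, L{3,3}→R{3,3}, R{0,1}→L{1,2}, R{1,1}→L{1,1}, R{1,2}→L{2,3}, R{1,3}→L{0,2}. Then every state reaches a rendezvous state within at most 3 transitions. -/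
import Mathlib


/-- States (tagged unordered pairs of levels mod 4; tag `true` = R, `false` = L)
from which rendezvous is achieved in one round, per the case analysis of the
opposite-orientation lemma. -/
def rdvOpp : Bool × Sym2 (ZMod 4) → Prop
  | (false, p) => p ∈ ({s(0,0), s(0,1), s(0,2), s(1,1), s(1,2), s(2,2)} :
                        Set (Sym2 (ZMod 4)))
  | (true, p) => p ∈ ({s(0,0), s(0,2), s(0,3), s(2,2), s(2,3), s(3,3)} :
                        Set (Sym2 (ZMod 4)))

/-- Transition function given by the case analysis of the opposite-orientation
lemma: `L{0,3}→R{0,1}`, `L{1,3}→R{0,2}`, `L{2,3}→R{0,3}`, `L{3,3}→R{3,3}`,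
`R{0,1}→L{1,2}`, `R{1,1}→L{1,1}`, `R{1,2}→L{2,3}`, `R{1,3}→L{0,2}`. -/
def nextOpp : Bool × Sym2 (ZMod 4) → Bool × Sym2 (ZMod 4)
  | (false, p) =>
      if p = s(0,3) then (true, s(0,1))
      else if p = s(1,3) then (true, s(0,2))
      else if p = s(2,3) then (true, s(0,3))
      else if p = s(3,3) then (true, s(3,3))
      else (false, p)
  | (true, p) =>
      if p = s(0,1) then (false, s(1,2))
      else if p = s(1,1) then (false, s(1,1))
      else if p = s(1,2) then (false, s(2,3))
      else if p = s(1,3) then (false, s(0,2))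
      else (true, p)

instance : DecidablePred rdvOpp := fun st =>
  match st with
  | (false, p) => decidable_of_iff
      (p = s(0,0) ∨ p = s(0,1) ∨ p = s(0,2) ∨ p = s(1,1) ∨ p = s(1,2) ∨ p = s(2,2))
      (by simp [rdvOpp, Set.mem_insert_iff])
  | (true, p) => decidable_of_iff
      (p = s(0,0) ∨ p = s(0,2) ∨ p = s(0,3) ∨ p = s(2,2) ∨ p = s(2,3) ∨ p = s(3,3))
      (by simp [rdvOpp, Set.mem_insert_iff])

/-- Every state reaches a rendezvous state within at most 3 transitions. -/
theorem opposite_orientation_rendezvous (st : Bool × Sym2 (ZMod 4)) :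
    ∃ k ≤ 3, rdvOpp (nextOpp^[k] st) := by
  obtain ⟨b, p⟩ := st
  induction p using Sym2.ind with
  | _ x y =>
    fin_cases b <;> fin_cases x <;> fin_cases y <;>
      first
        | exact ⟨0, by norm_num, by decide⟩
        | exact ⟨1, by norm_num, by decide⟩
        | exact ⟨2, by norm_num, by decide⟩
        | exact ⟨3, by norm_num, by decide⟩
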